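/- arXiv:2411.06693 — 9 statements merged into one kernel-verified Lean document; each statement's English description precedes it below -/
import Mathlib

section
/- A poset P is an interval order (does not embed 2⊕2) if and only if the set AM(P) of maximal antichains of P, ordered by: A ≤ B iff for every a ∈ A there exists b ∈ B with a ≤ b, is a total order. -/
/-- Two elements are incomparable. -/
def Incomp {α : Type*} [PartialOrder α] (x y : α) : Prop := ¬ x ≤ y ∧ ¬ y ≤ x

/-- A poset is an interval order iff it does not embed `2 ⊕ 2`. -/
def IsIntervalOrder (α : Type*) [PartialOrder α] : Prop :=
  ¬ ∃ a b c d : α, a < b ∧ c < d ∧ Incomp a c ∧ Incomp a d ∧ Incomp b c ∧ Incomp b d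

/-- A maximal antichain. -/
def MaxAntichain {α : Type*} [PartialOrder α] (A : Set α) : Prop :=
  IsAntichain (· ≤ ·) A ∧ ∀ B : Set α, IsAntichain (· ≤ ·) B → A ⊆ B → A = B

/-- The order on maximal antichains: `A ≤ B` iff every element of `A` is below
some element of `B`. -/
def AMle {α : Type*} [PartialOrder α] (A B : Set α) : Prop :=
  ∀ a ∈ A, ∃ b ∈ B, a ≤ b

/-- Every element is comparable to some element of a maximal antichain. -/
lemma maxAntichain_exists_comparable {α : Type*} [PartialOrder α] {B : Set α}
    (hB : MaxAntichain B) (x : α) : ∃ b ∈ B, x ≤ b ∨ b ≤ x := by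
  by_cases hx : x ∈ B
  · exact ⟨x, hx, Or.inl le_rfl⟩
  by_contra h
  push_neg at h
  have hanti : IsAntichain (· ≤ ·) (insert x B) := by
    intro p hp q hq hpq hle
    rcases hp with rfl | hp
    · rcases hq with rfl | hq
      · exact hpq rfl
      · exact (h q hq).1 hle
    · rcases hq with rfl | hq
      · exact (h p hp).2 hle
      · exact hB.1 hp hq hpq hle
  have heq : B = insert x B := hB.2 _ hanti (Set.subset_insert _ _)
  exact hx (heq ▸ Set.mem_insert x B)

/-- Every antichain extends to a maximal antichain. -/
lemma exists_maxAntichain_superset {α : Type*} [PartialOrder α] {S : Set α}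
    (hS : IsAntichain (· ≤ ·) S) : ∃ M : Set α, MaxAntichain M ∧ S ⊆ M := by
  obtain ⟨M, hSM, hM⟩ := zorn_subset_nonempty {B : Set α | IsAntichain (· ≤ ·) B}
    (fun c hc hchain _ => ⟨⋃₀ c, by
      intro p hp q hq hpq hle
      obtain ⟨B1, hB1, hpB1⟩ := hp
      obtain ⟨B2, hB2, hqB2⟩ := hq
      rcases hchain.total hB1 hB2 with hsub | hsub
      · exact (hc hB2) (hsub hpB1) hqB2 hpq hle
      · exact (hc hB1) hpB1 (hsub hqB2) hpq hle,
      fun B hB => Set.subset_sUnion_of_mem hB⟩) S hS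
  exact ⟨M, ⟨hM.1, fun B hB hMB => Set.Subset.antisymm hMB (hM.2 hB hMB)⟩, hSM⟩

/-- A poset is an interval order iff the set of its maximal antichains, with the
order `A ≤ B` iff every element of `A` is below some element of `B`, is a total
order. -/
theorem isIntervalOrder_iff_maxAntichains_totalOrder (α : Type*) [PartialOrder α] :
    IsIntervalOrder α ↔
      ((∀ A : Set α, MaxAntichain A → AMle A A) ∧
       (∀ A B C : Set α, MaxAntichain A → MaxAntichain B →
          MaxAntichain C → AMle A B → AMle B C → AMle A C) ∧
       (∀ A B : Set α, MaxAntichain A → MaxAntichain B →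
          AMle A B → AMle B A → A = B) ∧
       (∀ A B : Set α, MaxAntichain A → MaxAntichain B →
          AMle A B ∨ AMle B A)) := by
  constructor
  · intro hIO
    refine ⟨fun A _ a ha => ⟨a, ha, le_rfl⟩, ?_, ?_, ?_⟩
    · intro A B C _ _ _ hAB hBC a ha
      obtain ⟨b, hb, hab⟩ := hAB a ha
      obtain ⟨c, hc, hbc⟩ := hBC b hb
      exact ⟨c, hc, hab.trans hbc⟩
    · intro A B hA hB hAB hBA
      have key : ∀ A B : Set α, MaxAntichain A → MaxAntichain B →
          AMle A B → AMle B A → A ⊆ B := by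
        intro A B hA _ hAB hBA a ha
        obtain ⟨b, hb, hab⟩ := hAB a ha
        obtain ⟨a', ha', hba⟩ := hBA b hb
        have haa' : a = a' := by
          by_contra hne
          exact hA.1 ha ha' hne (hab.trans hba)
        have : a = b := le_antisymm hab (haa' ▸ hba)
        exact this ▸ hb
      exact (key A B hA hB hAB hBA).antisymm (key B A hB hA hBA hAB)
    · intro A B hA hB
      by_contra h
      push_neg at h
      obtain ⟨hnAB, hnBA⟩ := h
      simp only [AMle, not_forall] at hnAB hnBA
      obtain ⟨a, ha, hano⟩ := hnAB
      obtain ⟨b, hb, hbno⟩ := hnBA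
      push_neg at hano hbno
      -- a ∈ A with no element of B above it; b ∈ B with no element of A above it
      obtain ⟨b', hb', hcomp⟩ := maxAntichain_exists_comparable hB a
      have hb'a : b' < a := by
        rcases hcomp with hle | hle
        · exact absurd hle (hano b' hb')
        · refine lt_of_le_of_ne hle fun heq => ?_
          exact hano b' hb' (heq ▸ le_rfl)
      obtain ⟨a', ha', hcomp'⟩ := maxAntichain_exists_comparable hA b
      have ha'b : a' < b := by
        rcases hcomp' with hle | hle
        · exact absurd hle (hbno a' ha')
        · refine lt_of_le_of_ne hle fun heq => ?_
          exact hbno a' ha' (heq ▸ le_rfl)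
      -- b' b incomparable
      have hb'b : Incomp b' b := by
        have hne : b' ≠ b := fun heq => hbno a ha (heq ▸ hb'a.le)
        exact ⟨hB.1 hb' hb hne, hB.1 hb hb' hne.symm⟩
      -- a a' incomparable
      have haa' : Incomp a a' := by
        have hne : a' ≠ a := fun heq => hano b hb (heq ▸ ha'b.le)
        exact ⟨hA.1 ha ha' hne.symm, hA.1 ha' ha hne⟩
      -- b' a' incomparable
      have hb'a' : Incomp b' a' := by
        constructor
        · intro hle; exact hb'b.1 (hle.trans ha'b.le)
        · intro hle; exact haa'.2 (hle.trans hb'a.le)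
      -- a b incomparable
      have hab : Incomp a b := ⟨hano b hb, hbno a ha⟩
      exact hIO ⟨b', a, a', b, hb'a, ha'b, hb'a', hb'b, haa', hab⟩
  · rintro ⟨_, _, _, htot⟩ ⟨a, b, c, d, hab, hcd, hac, had, hbc, hbd⟩
    have hS1 : IsAntichain (· ≤ ·) ({b, c} : Set α) := by
      intro p hp q hq hpq hle
      simp only [Set.mem_insert_iff, Set.mem_singleton_iff] at hp hq
      rcases hp with rfl | rfl <;> rcases hq with rfl | rfl
      · exact hpq rfl
      · exact hbc.1 hle
      · exact hbc.2 hle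
      · exact hpq rfl
    have hS2 : IsAntichain (· ≤ ·) ({a, d} : Set α) := by
      intro p hp q hq hpq hle
      simp only [Set.mem_insert_iff, Set.mem_singleton_iff] at hp hq
      rcases hp with rfl | rfl <;> rcases hq with rfl | rfl
      · exact hpq rfl
      · exact had.1 hle
      · exact had.2 hle
      · exact hpq rfl
    obtain ⟨A, hA, hSA⟩ := exists_maxAntichain_superset hS1
    obtain ⟨B, hB, hSB⟩ := exists_maxAntichain_superset hS2
    have hbA : b ∈ A := hSA (Set.mem_insert _ _)
    have hcA : c ∈ A := hSA (Set.mem_insert_of_mem _ rfl)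
    have haB : a ∈ B := hSB (Set.mem_insert _ _)
    have hdB : d ∈ B := hSB (Set.mem_insert_of_mem _ rfl)
    rcases htot A B hA hB with hle | hle
    · obtain ⟨x, hxB, hbx⟩ := hle b hbA
      by_cases hxa : x = a
      · exact hab.not_ge (hxa ▸ hbx)
      · exact hB.1 haB hxB (Ne.symm hxa) (hab.le.trans hbx)
    · obtain ⟨y, hyA, hdy⟩ := hle d hdB
      by_cases hyc : y = c
      · exact hcd.not_ge (hyc ▸ hdy)
      · exact hA.1 hcA hyA (Ne.symm hyc) (hcd.le.trans hdy)
end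

section
/- Let P be a well-founded, level-finite interval order and let x be a minimal element of P such that U(x) is maximal with respect to set inclusion among {U(t) : t ∈ Min(P)}. Then U(x) = P \ Min(P); equivalently, Min(P) is the only maximal antichain of P containing x. -/
/-- The strict up-set of an element. -/
def U {α : Type*} [PartialOrder α] (x : α) : Set α := {y : α | x < y}

/-!
In an interval order the strict up-sets form a chain: if `b ∈ U a \ U c` and `d ∈ U c \ U a`,
then `a < b` and `c < d` span an induced `2 ⊕ 2`. Every non-minimal `y` lies above a minimal `m`
by well-foundedness, and comparing `U m` with the inclusion-maximal `U x` puts `y` in `U x`.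
-/

theorem exists_isMin_lt_of_not_isMin {α : Type*} [PartialOrder α] [WellFoundedLT α] {y : α}
    (hy : ¬ IsMin y) : ∃ m, IsMin m ∧ m < y := by
  obtain ⟨m, hmy, hm⟩ := exists_minimal_le_of_wellFoundedLT (fun _ ↦ True) y trivial
  rw [minimal_true] at hm
  exact ⟨m, hm, hmy.lt_of_ne (by rintro rfl; exact hy hm)⟩

theorem IsIntervalOrder.U_subset_or_subset {α : Type*} [PartialOrder α]
    (hio : IsIntervalOrder α) (a c : α) : U a ⊆ U c ∨ U c ⊆ U a := by
  by_contra! h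
  obtain ⟨b, hab, hcb⟩ := Set.not_subset.mp h.1
  obtain ⟨d, hcd, had⟩ := Set.not_subset.mp h.2
  change a < b at hab
  change c < d at hcd
  change ¬ a < d at had
  change ¬ c < b at hcb
  refine hio ⟨a, b, c, d, hab, hcd, ⟨?_, ?_⟩, ⟨?_, ?_⟩, ⟨?_, ?_⟩, ⟨?_, ?_⟩⟩
  · exact fun h ↦ had (h.trans_lt hcd)
  · exact fun h ↦ hcb (h.trans_lt hab)
  · exact fun h ↦ h.lt_or_eq.elim had (by rintro rfl; exact hcb (hcd.trans hab))
  · exact fun h ↦ hcb ((hcd.trans_le h).trans hab)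
  · exact fun h ↦ had ((hab.trans_le h).trans hcd)
  · exact fun h ↦ h.lt_or_eq.elim hcb (by rintro rfl; exact had (hab.trans hcd))
  · exact fun h ↦ had (hab.trans_le h)
  · exact fun h ↦ hcb (hcd.trans_le h)

theorem upset_of_max_minimal_general {α : Type*} [PartialOrder α]
    (hio : IsIntervalOrder α)
    (hwf : WellFounded ((· < ·) : α → α → Prop))
    (x : α)
    (hmax : ∀ t : α, IsMin t → U x ⊆ U t → U t = U x) :
    U x = {y : α | ¬ IsMin y} := by
  have : WellFoundedLT α := ⟨hwf⟩
  ext y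
  refine ⟨fun hxy ↦ not_isMin_of_lt hxy, fun hy ↦ ?_⟩
  obtain ⟨m, hm, hmy⟩ := exists_isMin_lt_of_not_isMin hy
  rcases hio.U_subset_or_subset x m with hxm | hmx
  · exact hmax m hm hxm ▸ hmy
  · exact hmx hmy

/-- In a well-founded level-finite interval order, if `x` is a minimal element
such that `U x` is maximal with respect to inclusion among `{U t : t minimal}`,
then `U x` is exactly the complement of the set of minimal elements;
equivalently, the set of minimal elements is the only maximal antichain
containing `x`. -/
theorem upset_of_max_minimal {α : Type*} [PartialOrder α]
    (hio : IsIntervalOrder α)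
    (hwf : WellFounded ((· < ·) : α → α → Prop))
    (hlf : ∀ o : Ordinal, {x : α | (hwf.apply x).rank = o}.Finite)
    (x : α) (hx : IsMin x)
    (hmax : ∀ t : α, IsMin t → U x ⊆ U t → U t = U x) :
    U x = {y : α | ¬ IsMin y} :=
  upset_of_max_minimal_general hio hwf x hmax
end

section
/- In an interval order, any two nonprincipal ideals are comparable with respect to set inclusion. Moreover, if I ⊊ J are nonprincipal ideals, then there exists a ∈ J \ I such that I ⊆ ↓a. -/
/-- An ideal: a nonempty updirected initial segment. -/
def IsIdealSet {α : Type*} [PartialOrder α] (I : Set α) : Prop :=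
  I.Nonempty ∧ IsLowerSet I ∧ DirectedOn (· ≤ ·) I

/-- A nonprincipal ideal: one with no greatest element. -/
def Nonprincipal {α : Type*} [PartialOrder α] (I : Set α) : Prop :=
  ¬ ∃ a ∈ I, ∀ x ∈ I, x ≤ a

/-- In a nonprincipal ideal, every element has a strict upper bound in the ideal. -/
lemma exists_gt_mem {α : Type*} [PartialOrder α] {I : Set α}
    (hI : IsIdealSet I) (hnp : Nonprincipal I) {a : α} (ha : a ∈ I) :
    ∃ b ∈ I, a < b := by
  by_contra h
  push_neg at h
  apply hnp
  refine ⟨a, ha, fun x hx => ?_⟩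
  obtain ⟨b, hb, hab, hxb⟩ := hI.2.2 a ha x hx
  rcases hab.lt_or_eq with h' | h'
  · exact absurd h' (h b hb)
  · exact h' ▸ hxb

/-- In an interval order, any two nonprincipal ideals are comparable by
inclusion; moreover, if `I ⊊ J`, then some `a ∈ J \ I` satisfies `I ⊆ ↓a`. -/
theorem nonprincipal_ideals_comparable {α : Type*} [PartialOrder α]
    (hio : IsIntervalOrder α) (I J : Set α)
    (hI : IsIdealSet I) (hJ : IsIdealSet J)
    (hInp : Nonprincipal I) (hJnp : Nonprincipal J) :
    (I ⊆ J ∨ J ⊆ I) ∧ (I ⊂ J → ∃ a ∈ J \ I, ∀ x ∈ I, x ≤ a) := by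
  constructor
  · by_contra h
    push_neg at h
    obtain ⟨hIJ, hJI⟩ := h
    obtain ⟨a, haI, haJ⟩ := Set.not_subset.mp hIJ
    obtain ⟨c, hcJ, hcI⟩ := Set.not_subset.mp hJI
    obtain ⟨b, hbI, hab⟩ := exists_gt_mem hI hInp haI
    obtain ⟨d, hdJ, hcd⟩ := exists_gt_mem hJ hJnp hcJ
    refine hio ⟨a, b, c, d, hab, hcd, ?_, ?_, ?_, ?_⟩
    · exact ⟨fun h => haJ (hJ.2.1 h hcJ), fun h => hcI (hI.2.1 h haI)⟩
    · exact ⟨fun h => haJ (hJ.2.1 h hdJ), fun h => hcI (hI.2.1 hcd.le (hI.2.1 h haI))⟩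
    · exact ⟨fun h => haJ (hJ.2.1 (hab.le.trans h) hcJ), fun h => hcI (hI.2.1 h hbI)⟩
    · exact ⟨fun h => haJ (hJ.2.1 (hab.le.trans h) hdJ), fun h => hcI (hI.2.1 hcd.le (hI.2.1 h hbI))⟩
  · intro hss
    by_contra hno
    push_neg at hno
    obtain ⟨c, hcJ, hcI⟩ := Set.exists_of_ssubset hss
    obtain ⟨d, hdJ, hcd⟩ := exists_gt_mem hJ hJnp hcJ
    have hdI : d ∉ I := fun hd => hcI (hI.2.1 hcd.le hd)
    obtain ⟨x, hxI, hxc⟩ := hno c ⟨hcJ, hcI⟩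
    obtain ⟨y, hyI, hyd⟩ := hno d ⟨hdJ, hdI⟩
    obtain ⟨z, hzI, hxz, hyz⟩ := hI.2.2 x hxI y hyI
    obtain ⟨z', hz'I, hzz'⟩ := exists_gt_mem hI hInp hzI
    have hzc : ¬ z ≤ c := fun h => hxc (hxz.trans h)
    have hzd : ¬ z ≤ d := fun h => hyd (hyz.trans h)
    refine hio ⟨z, z', c, d, hzz', hcd, ?_, ?_, ?_, ?_⟩
    · exact ⟨hzc, fun h => hcI (hI.2.1 h hzI)⟩
    · exact ⟨hzd, fun h => hdI (hI.2.1 h hzI)⟩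
    · exact ⟨fun h => hzc (hzz'.le.trans h), fun h => hcI (hI.2.1 h hz'I)⟩
    · exact ⟨fun h => hzd (hzz'.le.trans h), fun h => hdI (hI.2.1 h hz'I)⟩
end

section
/- Let P = (V, ≤) be an interval order, I a nonprincipal ideal, and I⁺ := {x ∈ V : x > y for some y ∈ I}. Then A := V \ (I ∪ I⁺) is an antichain, and every element of A is incomparable to every element of I. -/
/-- If `I` is a nonprincipal ideal of an interval order and
`I⁺ = {x : x > y for some y ∈ I}`, then `V \ (I ∪ I⁺)` is an antichain whose
elements are incomparable to every element of `I`. -/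
theorem complement_of_nonprincipal_ideal_antichain {α : Type*} [PartialOrder α]
    (hio : IsIntervalOrder α) (I : Set α)
    (hI : IsIdealSet I) (hInp : Nonprincipal I) :
    IsAntichain (· ≤ ·) (Set.univ \ (I ∪ {x : α | ∃ y ∈ I, y < x})) ∧
    ∀ a ∈ Set.univ \ (I ∪ {x : α | ∃ y ∈ I, y < x}), ∀ b ∈ I, Incomp a b := by
  obtain ⟨hne, hlow, hdir⟩ := hI
  have hinc : ∀ a ∈ Set.univ \ (I ∪ {x : α | ∃ y ∈ I, y < x}), ∀ b ∈ I, Incomp a b := by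
    rintro a ⟨-, ha⟩ b hb
    constructor
    · intro hab
      exact ha (Or.inl (hlow hab hb))
    · intro hba
      rcases eq_or_lt_of_le hba with rfl | h
      · exact ha (Or.inl hb)
      · exact ha (Or.inr ⟨b, hb, h⟩)
  refine ⟨?_, hinc⟩
  -- find c < d in I
  obtain ⟨c, hc⟩ := hne
  have : ∃ x ∈ I, ¬ x ≤ c := by
    by_contra h
    push_neg at h
    exact hInp ⟨c, hc, h⟩
  obtain ⟨x, hx, hxc⟩ := this
  obtain ⟨d, hd, hcd, hxd⟩ := hdir c hc x hx
  have hcd' : c < d := lt_of_le_of_ne hcd (by rintro rfl; exact hxc hxd)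
  intro a ha b hb hab hle
  have hab' : a < b := lt_of_le_of_ne hle hab
  exact hio ⟨a, b, c, d, hab', hcd', hinc a ha c hc, hinc a ha d hd,
    hinc b hb c hc, hinc b hb d hd⟩
end

section
/- Every ideal in an interval order contains a cofinal chain. -/
/-- The 2+2 criterion: for any two strict pairs, one cross comparability holds. -/
lemma IsIntervalOrder.cross {α : Type*} [PartialOrder α] (hio : IsIntervalOrder α)
    {a b c d : α} (h1 : a < b) (h2 : c < d) : a ≤ d ∨ c ≤ b := by
  by_contra h
  push_neg at h
  obtain ⟨had, hcb⟩ := h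
  exact hio ⟨a, b, c, d, h1, h2,
    ⟨fun h => had (h.trans h2.le), fun h => hcb (h.trans h1.le)⟩,
    ⟨had, fun h => hcb (h2.le.trans (h.trans h1.le))⟩,
    ⟨fun h => had ((h1.le.trans h).trans h2.le), hcb⟩,
    ⟨fun h => had (h1.le.trans h), fun h => hcb (h2.le.trans h)⟩⟩

/-- Every ideal in an interval order contains a cofinal chain. -/
theorem ideal_contains_cofinal_chain {α : Type*} [PartialOrder α]
    (hio : IsIntervalOrder α) (I : Set α) (hI : IsIdealSet I) :
    ∃ C ⊆ I, IsChain (· ≤ ·) C ∧ ∀ x ∈ I, ∃ c ∈ C, x ≤ c := by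
  obtain ⟨hne, hlow, hdir⟩ := hI
  have hzorn : ∀ c ⊆ {C : Set α | C ⊆ I ∧ IsChain (· ≤ ·) C}, IsChain (· ⊆ ·) c →
      ∃ ub ∈ {C : Set α | C ⊆ I ∧ IsChain (· ≤ ·) C}, ∀ s ∈ c, s ⊆ ub := by
    intro c hcS hcchain
    refine ⟨⋃₀ c, ⟨Set.sUnion_subset fun s hs => (hcS hs).1, ?_⟩,
      fun s hs => Set.subset_sUnion_of_mem hs⟩
    intro a ha b hb hab
    obtain ⟨s, hs, has⟩ := ha
    obtain ⟨t, ht, hbt⟩ := hb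
    rcases hcchain.total hs ht with h | h
    · exact (hcS ht).2 (h has) hbt hab
    · exact (hcS hs).2 has (h hbt) hab
  obtain ⟨C, hCmem, hmax⟩ := zorn_subset {C | C ⊆ I ∧ IsChain (· ≤ ·) C} hzorn
  have hCI : C ⊆ I := hCmem.1
  have hCchain : IsChain (· ≤ ·) C := hCmem.2
  refine ⟨C, hCI, hCchain, ?_⟩
  by_contra hx
  push_neg at hx
  obtain ⟨x, hxI, hxc⟩ := hx
  -- adding any z ∈ I with x ≤ z and z above all of C contradicts maximality
  have hadd : ∀ z ∈ I, x ≤ z → (∀ c ∈ C, c ≤ z) → False := by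
    intro z hz hxz hcz
    have hch : IsChain (· ≤ ·) (insert z C) :=
      hCchain.insert fun c hc _ => Or.inr (hcz c hc)
    have hsub : C ⊆ insert z C := Set.subset_insert _ _
    have := hmax (y := insert z C) ⟨Set.insert_subset hz hCI, hch⟩ hsub
    exact hxc z (this (Set.mem_insert z C)) hxz
  by_cases hall : ∀ c ∈ C, c ≤ x
  · exact hadd x hxI le_rfl hall
  · push_neg at hall
    obtain ⟨b, hbC, hbx⟩ := hall
    by_cases hmaxC : ∃ m ∈ C, ∀ c ∈ C, c ≤ m
    · obtain ⟨m, hmC, hm⟩ := hmaxC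
      obtain ⟨z, hzI, hxz, hmz⟩ := hdir x hxI m (hCI hmC)
      exact hadd z hzI hxz fun c hc => (hm c hc).trans hmz
    · push_neg at hmaxC
      obtain ⟨z, hzI, hxz, hbz⟩ := hdir x hxI b (hCI hbC)
      have hxz' : x < z := lt_of_le_of_ne hxz fun h => hbx (h ▸ hbz)
      refine hadd z hzI hxz fun c hc => ?_
      obtain ⟨c', hc'C, hcc'⟩ := hmaxC c hc
      have hcc : c < c' := by
        rcases hCchain.total hc hc'C with h | h
        · exact lt_of_le_of_ne h fun he => hcc' (he ▸ le_rfl)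
        · exact absurd h hcc'
      rcases hio.cross hxz' hcc with h | h
      · exact absurd h (hxc c' hc'C)
      · exact h
end

section
/- Every ideal in an interval order with no infinite antichain is pure, i.e., every proper initial segment of the ideal has an upper bound in the ideal outside that initial segment. -/
/-- In an interval order with no infinite antichain, every ideal `I` is pure:
every proper initial segment `S` of `I` has an upper bound in `I \ S`. -/
theorem ideal_pure {α : Type*} [PartialOrder α]
    (hio : IsIntervalOrder α)
    (hfa : ∀ A : Set α, IsAntichain (· ≤ ·) A → A.Finite)
    (I : Set α) (hI : IsIdealSet I) :
    ∀ S ⊆ I, (∀ x ∈ S, ∀ y ∈ I, y ≤ x → y ∈ S) → S ≠ I →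
      ∃ b ∈ I \ S, ∀ x ∈ S, x ≤ b := by
  intro S hSI hSinit hSne
  obtain ⟨a0, ha0I, ha0S⟩ : ∃ a, a ∈ I ∧ a ∉ S := by
    by_contra h
    push_neg at h
    exact hSne (Set.Subset.antisymm hSI h)
  -- It suffices to find an upper bound of S inside I (possibly in S).
  suffices h : ∃ b ∈ I, ∀ x ∈ S, x ≤ b by
    obtain ⟨b, hbI, hb⟩ := h
    obtain ⟨u, huI, hbu, hau⟩ := hI.2.2 b hbI a0 ha0I
    refine ⟨u, ⟨huI, fun hu => ha0S (hSinit _ hu a0 ha0I hau)⟩,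
      fun x hx => (hb x hx).trans hbu⟩
  by_contra hno
  push_neg at hno
  -- hno : ∀ b ∈ I, ∃ x ∈ S, ¬ x ≤ b
  choose s hsS hsle using hno
  have step : ∀ b : {x // x ∈ I}, ∃ c : {x // x ∈ I},
      (b : α) ≤ c ∧ s b b.2 ≤ c := by
    intro b
    obtain ⟨z, hz, h1, h2⟩ := hI.2.2 b b.2 (s b b.2) (hSI (hsS b b.2))
    exact ⟨⟨z, hz⟩, h1, h2⟩
  choose nxt h1 h2 using step
  set t : ℕ → {x // x ∈ I} := fun n => nxt^[n] ⟨a0, ha0I⟩ with ht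
  have htsucc : ∀ n, t (n + 1) = nxt (t n) := by
    intro n
    simp [ht, Function.iterate_succ_apply']
  set tv : ℕ → α := fun n => (t n : α) with htv
  set sn : ℕ → α := fun n => s (t n) (t n).2 with hsn
  have hmono : Monotone tv := by
    apply monotone_nat_of_le_succ
    intro n
    have := h1 (t n)
    rw [← htsucc n] at this
    exact this
  have hsleT : ∀ n, sn n ≤ tv (n + 1) := by
    intro n
    have := h2 (t n)
    rw [← htsucc n] at this
    exact this
  have hsnS : ∀ n, sn n ∈ S := fun n => hsS (t n) (t n).2
  have hsnot : ∀ n, ¬ sn n ≤ tv n := fun n => hsle (t n) (t n).2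
  have htI : ∀ n, tv n ∈ I := fun n => (t n).2
  have htS : ∀ n, tv n ∉ S := by
    intro n
    induction n with
    | zero => exact ha0S
    | succ k ih =>
      intro hmem
      exact ih (hSinit _ hmem (tv k) (htI k) (hmono (Nat.le_succ k)))
  have hts : ∀ k n, ¬ tv k ≤ sn n := by
    intro k n hle
    exact htS k (hSinit _ (hsnS n) (tv k) (htI k) hle)
  have hsnt : ∀ k n, k ≤ n → ¬ sn n ≤ tv k := by
    intro k n hkn hle
    exact hsnot n (hle.trans (hmono hkn))
  have hsle' : ∀ n k, n + 1 ≤ k → sn n ≤ tv k :=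
    fun n k hk => (hsleT n).trans (hmono hk)
  have ht01 : tv 0 < tv 1 := by
    refine lt_of_le_of_ne (hmono (Nat.le_succ 0)) ?_
    intro h
    exact hsnot 0 (h ▸ hsleT 0)
  -- key lemma: no increasing comparabilities among sn for indices ≥ 1
  have key : ∀ n m, 1 ≤ n → n < m → ¬ sn n ≤ sn m := by
    intro n m hn hnm hle
    have hne : sn n ≠ sn m := by
      intro h
      exact hsnot m (h ▸ hsle' n m hnm)
    have hlt : sn n < sn m := lt_of_le_of_ne hle hne
    exact hio ⟨sn n, sn m, tv 0, tv 1, hlt, ht01,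
      ⟨hsnt 0 n (Nat.zero_le n), hts 0 n⟩,
      ⟨hsnt 1 n hn, hts 1 n⟩,
      ⟨hsnt 0 m (Nat.zero_le m), hts 0 m⟩,
      ⟨hsnt 1 m (hn.trans hnm.le), hts 1 m⟩⟩
  have key' : ∀ n m, n < m → ¬ sn m ≤ sn n := by
    intro n m hnm hle
    exact hsnot m (hle.trans (hsle' n m hnm))
  have hanti : IsAntichain (· ≤ ·) (sn '' {n | 1 ≤ n}) := by
    rintro x ⟨n, hn, rfl⟩ y ⟨m, hm, rfl⟩ hne hle
    rcases lt_trichotomy n m with h | h | h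
    · exact key n m hn h hle
    · exact hne (by rw [h])
    · exact key' m n h hle
  have hinj : Set.InjOn sn {n | 1 ≤ n} := by
    intro n hn m hm heq
    by_contra hne
    rcases Nat.lt_or_ge n m with h | h
    · exact key n m hn h heq.le
    · exact key m n hm (lt_of_le_of_ne h (Ne.symm hne)) heq.symm.le
  have hinf : (sn '' {n | 1 ≤ n}).Infinite := by
    apply Set.Infinite.image
    · exact hinj
    · exact Set.Ici_infinite 1
  exact hinf (hfa _ hanti)
end

section
/- Let P be an interval order. If AM(P) ordered by A ≤ B iff every element of A is below some element of B is a non-scattered chain and P has no infinite antichain, then P contains a chain isomorphic to the rationals (i.e., P is non-scattered). Conversely, if P is non-scattered then AM(P) is a non-scattered chain. -/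
/-- `P` is non-scattered: it contains a chain isomorphic to `ℚ`. -/
def NonScattered (α : Type*) [PartialOrder α] : Prop :=
  ∃ f : ℚ → α, ∀ q r : ℚ, q < r ↔ f q < f r

/-- The chain of maximal antichains is non-scattered. -/
def AMNonScattered (α : Type*) [PartialOrder α] : Prop :=
  ∃ f : ℚ → Set α, (∀ q : ℚ, MaxAntichain (f q)) ∧
    ∀ q r : ℚ, q < r ↔ (AMle (f q) (f r) ∧ f q ≠ f r)

namespace NSAM

variable {α : Type*} [PartialOrder α]

lemma anti_eq {A : Set α} (hA : IsAntichain (· ≤ ·) A) {x y : α}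
    (hx : x ∈ A) (hy : y ∈ A) (h : x ≤ y) : x = y := by
  by_contra hne
  exact hA hx hy hne h

lemma ivl (hio : IsIntervalOrder α) {a b c d : α} (hab : a < b) (hcd : c < d) :
    a < d ∨ c < b := by
  by_contra h
  push_neg at h
  obtain ⟨h1, h2⟩ := h
  refine hio ⟨a, b, c, d, hab, hcd, ?_, ?_, ?_, ?_⟩
  · exact ⟨fun h => h1 (lt_of_le_of_lt h hcd), fun h => h2 (lt_of_le_of_lt h hab)⟩
  · constructor
    · intro h
      rcases h.lt_or_eq with h' | h'
      · exact h1 h'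
      · subst h'; exact h2 (hcd.trans hab)
    · intro h
      exact h2 ((hcd.trans_le h).trans hab)
  · constructor
    · intro h
      exact h1 ((hab.trans_le h).trans hcd)
    · intro h
      rcases h.lt_or_eq with h' | h'
      · exact h2 h'
      · subst h'; exact h1 (hab.trans hcd)
  · exact ⟨fun h => h1 (hab.trans_le h), fun h => h2 (hcd.trans_le h)⟩

lemma max_compare {A : Set α} (hA : MaxAntichain A) {x : α} (hx : x ∉ A) :
    ∃ a ∈ A, a ≤ x ∨ x ≤ a := by
  by_contra h
  push_neg at h
  have hins : IsAntichain (· ≤ ·) (insert x A) := by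
    intro u hu v hv huv hle
    rcases Set.mem_insert_iff.mp hu with hux | huA
    · rcases Set.mem_insert_iff.mp hv with hvx | hvA
      · exact huv (hux.trans hvx.symm)
      · exact ((h v hvA).2) (hux ▸ hle)
    · rcases Set.mem_insert_iff.mp hv with hvx | hvA
      · exact ((h u huA).1) (hvx ▸ hle)
      · exact hA.1 huA hvA huv hle
  have heq := hA.2 _ hins (Set.subset_insert x A)
  rw [heq] at hx
  exact hx (Set.mem_insert x A)

lemma AMle_antisymm {A B : Set α} (hA : MaxAntichain A) (hB : MaxAntichain B)
    (h1 : AMle A B) (h2 : AMle B A) : A = B := by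
  have key : ∀ X Y : Set α, MaxAntichain X → MaxAntichain Y → AMle X Y → AMle Y X → X ⊆ Y := by
    intro X Y hX hY hXY hYX x hx
    obtain ⟨y, hy, hxy⟩ := hXY x hx
    obtain ⟨x', hx', hyx'⟩ := hYX y hy
    have hxx' : x = x' := anti_eq hX.1 hx hx' (hxy.trans hyx')
    have hxey : x = y := le_antisymm hxy (by rw [hxx']; exact hyx')
    rwa [hxey]
  exact Set.Subset.antisymm (key A B hA hB h1 h2) (key B A hB hA h2 h1)

lemma AMle_total (hio : IsIntervalOrder α) {A B : Set α}
    (hA : MaxAntichain A) (hB : MaxAntichain B) : AMle A B ∨ AMle B A := by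
  by_contra h
  push_neg at h
  obtain ⟨h1, h2⟩ := h
  unfold AMle at h1 h2
  push_neg at h1 h2
  obtain ⟨a, ha, hna⟩ := h1
  obtain ⟨b, hb, hnb⟩ := h2
  have haB : a ∉ B := fun hmem => hna a hmem le_rfl
  have hbA : b ∉ A := fun hmem => hnb b hmem le_rfl
  obtain ⟨b₁, hb₁, hc₁⟩ := max_compare hB haB
  have hb₁a : b₁ < a := by
    rcases hc₁ with h' | h'
    · exact lt_of_le_of_ne h' (fun he => haB (he ▸ hb₁))
    · exact absurd h' (hna b₁ hb₁)
  obtain ⟨a₁, ha₁, hc₂⟩ := max_compare hA hbA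
  have ha₁b : a₁ < b := by
    rcases hc₂ with h' | h'
    · exact lt_of_le_of_ne h' (fun he => hbA (he.symm ▸ ha₁))
    · exact absurd h' (hnb a₁ ha₁)
  rcases ivl hio hb₁a ha₁b with h' | h'
  · exact absurd (anti_eq hB.1 hb₁ hb h'.le) h'.ne
  · exact absurd (anti_eq hA.1 ha₁ ha h'.le) h'.ne

lemma exists_link {A B : Set α} (hA : MaxAntichain A) (hB : MaxAntichain B)
    (h : AMle A B) (hne : A ≠ B) : ∃ a ∈ A, ∃ b ∈ B, a < b := by
  have hBA : ¬ B ⊆ A := fun hsub => hne (hB.2 A hA.1 hsub).symm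
  obtain ⟨b, hb, hbA⟩ := Set.not_subset.mp hBA
  obtain ⟨a, ha, hc⟩ := max_compare hA hbA
  rcases hc with h' | h'
  · exact ⟨a, ha, b, hb, lt_of_le_of_ne h' (fun he => hbA (he ▸ ha))⟩
  · exfalso
    obtain ⟨b', hb', hab'⟩ := h a ha
    have hbb' : b = b' := anti_eq hB.1 hb hb' (h'.trans hab')
    have hab : a = b := le_antisymm (by rw [hbb']; exact hab') h'
    exact hbA (hab ▸ ha)

lemma amle_of_link (hio : IsIntervalOrder α) {A B : Set α}
    (hA : MaxAntichain A) (hB : MaxAntichain B) {a b : α}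
    (ha : a ∈ A) (hb : b ∈ B) (hab : a < b) : AMle A B := by
  rcases AMle_total hio hA hB with h | h
  · exact h
  · exfalso
    obtain ⟨a', ha', hba'⟩ := h b hb
    have haa' : a = a' := anti_eq hA.1 ha ha' (hab.le.trans hba')
    rw [← haa'] at hba'
    exact hab.not_ge hba'

lemma extend_max (x : α) : ∃ A : Set α, x ∈ A ∧ MaxAntichain A := by
  classical
  set S : Set (Set α) := {B : Set α | IsAntichain (· ≤ ·) B ∧ x ∈ B} with hS
  have hxS : ({x} : Set α) ∈ S := ⟨Set.subsingleton_singleton.isAntichain _, rfl⟩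
  have Hz : ∀ c ⊆ S, IsChain (· ⊆ ·) c → c.Nonempty →
      ∃ ub ∈ S, ∀ s ∈ c, s ⊆ ub := by
    intro c hcS hchain hcne
    refine ⟨⋃₀ c, ⟨?_, ?_⟩, fun s hs => Set.subset_sUnion_of_mem hs⟩
    · intro u hu v hv huv hle
      obtain ⟨B₁, hB₁c, hu1⟩ := hu
      obtain ⟨B₂, hB₂c, hv2⟩ := hv
      rcases hchain.total hB₁c hB₂c with hss | hss
      · exact (hcS hB₂c).1 (hss hu1) hv2 huv hle
      · exact (hcS hB₁c).1 hu1 (hss hv2) huv hle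
    · obtain ⟨B, hBc⟩ := hcne
      exact ⟨B, hBc, (hcS hBc).2⟩
  obtain ⟨m, hsub, hmax⟩ := zorn_subset_nonempty S Hz _ hxS
  refine ⟨m, hsub rfl, hmax.1.1, fun B hB hmB => ?_⟩
  have hBS : B ∈ S := ⟨hB, hmB (hmax.1.2)⟩
  exact Set.Subset.antisymm hmB (hmax.2 hBS hmB)

/-- Bundled hypotheses for the hard direction. -/
structure Nice (α : Type*) [PartialOrder α] where
  f : ℚ → Set α
  hio : IsIntervalOrder α
  hmax : ∀ q, MaxAntichain (f q)
  hle : ∀ {q r : ℚ}, q < r → AMle (f q) (f r)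
  hne : ∀ {q r : ℚ}, q < r → f q ≠ f r
  hfin : ∀ q, (f q).Finite

namespace Nice

variable {α : Type*} [PartialOrder α] (N : Nice α)

lemma anti (q : ℚ) : IsAntichain (· ≤ ·) (N.f q) := (N.hmax q).1

/-- Convexity of membership along the chain of antichains. -/
lemma conv {q s r : ℚ} (h1 : q < s) (h2 : s < r) {x : α}
    (hq : x ∈ N.f q) (hr : x ∈ N.f r) : x ∈ N.f s := by
  by_contra hs
  obtain ⟨d, hd, hc⟩ := max_compare (N.hmax s) hs
  rcases hc with h' | h'
  · -- d ≤ x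
    obtain ⟨e, he, hxe⟩ := N.hle h1 x hq
    have hde : d = e := anti_eq (N.anti s) hd he (h'.trans hxe)
    have : x = d := le_antisymm (hde ▸ hxe) h'
    exact hs (this ▸ hd)
  · -- x ≤ d
    have hxd : x < d := lt_of_le_of_ne h' (fun he => hs (he ▸ hd))
    obtain ⟨e, he, hde⟩ := N.hle h2 d hd
    have : x = e := anti_eq (N.anti r) hr he (hxd.le.trans hde)
    rw [← this] at hde
    exact absurd (le_antisymm h' hde) hxd.ne

/-- If `c` lives at level `s` but not at a later level `t`, something at `t` is above it. -/
lemma up {s t : ℚ} (h : s < t) {c : α} (hc : c ∈ N.f s) (hct : c ∉ N.f t) :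
    ∃ d ∈ N.f t, c < d := by
  obtain ⟨d, hd, hcomp⟩ := max_compare (N.hmax t) hct
  rcases hcomp with h' | h'
  · -- d ≤ c
    exfalso
    obtain ⟨e, he, hce⟩ := N.hle h c hc
    have hde : d = e := anti_eq (N.anti t) hd he (h'.trans hce)
    have : c = d := le_antisymm (hde ▸ hce) h'
    exact hct (this ▸ hd)
  · exact ⟨d, hd, lt_of_le_of_ne h' (fun he => hct (he ▸ hd))⟩

/-- If `c` lives at level `t` but not at an earlier level `s`, something at `s` is below it. -/
lemma dn {s t : ℚ} (h : s < t) {c : α} (hc : c ∈ N.f t) (hcs : c ∉ N.f s) :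
    ∃ d ∈ N.f s, d < c := by
  obtain ⟨d, hd, hcomp⟩ := max_compare (N.hmax s) hcs
  rcases hcomp with h' | h'
  · exact ⟨d, hd, lt_of_le_of_ne h' (fun he => hcs (he ▸ hd))⟩
  · -- c ≤ d
    exfalso
    obtain ⟨e, he, hde⟩ := N.hle h d hd
    have : c = e := anti_eq (N.anti t) hc he (h'.trans hde)
    rw [← this] at hde
    exact hcs ((le_antisymm h' hde) ▸ hd)

/-- Key comparison: elements separated by a level they both avoid are comparable. -/
lemma key {s p t : ℚ} (h1 : s < p) (h2 : p < t) {c c' : α}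
    (hc : c ∈ N.f s) (hcp : c ∉ N.f p) (hc' : c' ∈ N.f t) (hc'p : c' ∉ N.f p) :
    c < c' := by
  obtain ⟨d', hd', hcd'⟩ := N.up h1 hc hcp
  obtain ⟨d, hd, hdc'⟩ := N.dn h2 hc' hc'p
  rcases ivl N.hio hcd' hdc' with h' | h'
  · exact h'
  · exact absurd (anti_eq (N.anti p) hd hd' h'.le) h'.ne

/-- `c` lives strictly inside the window `(p, q)`. -/
def Inside (c : α) (p q : ℚ) : Prop :=
  (∃ s, p < s ∧ s < q ∧ c ∈ N.f s) ∧ c ∉ N.f p ∧ c ∉ N.f q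

lemma inside_lt {x y : α} {p1 p2 q1 q2 : ℚ}
    (hx : N.Inside x p1 p2) (hy : N.Inside y q1 q2) (h : p2 ≤ q1) : x < y := by
  obtain ⟨⟨s, hs1, hs2, hxs⟩, hxp1, hxp2⟩ := hx
  obtain ⟨⟨t, ht1, ht2, hyt⟩, hyq1, hyq2⟩ := hy
  have hp2t : p2 < t := lt_of_le_of_lt h ht1
  have hyp2 : y ∉ N.f p2 := by
    rcases eq_or_lt_of_le h with rfl | hlt
    · exact hyq1
    · intro hmem
      exact hyq1 (N.conv hlt ht1 hmem hyt)
  exact N.key hs2 hp2t hxs hxp2 hyt hyp2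

/-- The splitting lemma: every window contains an element strictly inside a
strictly smaller window.  Uses finiteness of antichains. -/
lemma split {u v : ℚ} (h : u < v) :
    ∃ w : ℚ × ℚ × α, u < w.1 ∧ w.1 < w.2.1 ∧ w.2.1 < v ∧ N.Inside w.2.2 w.1 w.2.1 := by
  by_contra hcon
  push_neg at hcon
  -- every element of an intermediate level sticks out on one side
  have dich : ∀ s, u < s → s < v → ∀ c ∈ N.f s,
      (∀ t, u < t → t < s → c ∈ N.f t) ∨ (∀ t, s < t → t < v → c ∈ N.f t) := by
    intro s hus hsv c hc
    by_contra hd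
    push_neg at hd
    obtain ⟨⟨t₁, hut₁, ht₁s, hct₁⟩, ⟨t₂, hst₂, ht₂v, hct₂⟩⟩ := hd
    exact hcon (t₁, t₂, c) hut₁ (ht₁s.trans hst₂) ht₂v ⟨⟨s, ht₁s, hst₂, hc⟩, hct₁, hct₂⟩
  obtain ⟨m, hum, hmv⟩ := exists_between h
  -- R s : the elements of level s that stick out to the right
  set R : ℚ → Set α := fun s => {c | c ∈ N.f s ∧ ∀ t, s < t → t < v → c ∈ N.f t} with hR
  have hRfin : ∀ s, (R s).Finite := fun s => (N.hfin s).subset (fun c hc => hc.1)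
  have hRmono : ∀ {s s'}, u < s → s < s' → s' < v → R s ⊆ R s' := by
    intro s s' hus hss' hs'v c hc
    exact ⟨hc.2 s' hss' hs'v, fun t hts ht => hc.2 t (hss'.trans hts) ht⟩
  -- minimize the cardinality of R s over s ∈ (u, m)
  set T : Set ℕ := {n | ∃ s, u < s ∧ s < m ∧ (R s).ncard = n} with hT
  have hTne : T.Nonempty := by
    obtain ⟨s, hus, hsm⟩ := exists_between hum
    exact ⟨(R s).ncard, s, hus, hsm, rfl⟩
  obtain ⟨s₀, hus₀, hs₀m, hcard⟩ := Nat.sInf_mem hTne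
  obtain ⟨sL, husL, hsLs₀⟩ := exists_between hus₀
  have hs₀v : s₀ < v := hs₀m.trans hmv
  have hsub : R sL ⊆ R s₀ := hRmono husL hsLs₀ hs₀v
  have hle' : (R s₀).ncard ≤ (R sL).ncard := by
    rw [hcard]
    exact Nat.sInf_le ⟨sL, husL, hsLs₀.trans hs₀m, rfl⟩
  have hReq : R sL = R s₀ := Set.eq_of_subset_of_ncard_le hsub hle' (hRfin s₀)
  have hss : N.f s₀ ⊆ N.f sL := by
    intro c hc
    rcases dich s₀ hus₀ hs₀v c hc with hL | hRc
    · exact hL sL husL hsLs₀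
    · have : c ∈ R s₀ := ⟨hc, hRc⟩
      rw [← hReq] at this
      exact this.1
  exact N.hne hsLs₀ ((N.hmax s₀).2 _ (N.anti sL) hss).symm

end Nice

namespace Nice

variable {α : Type*} [PartialOrder α] (N : Nice α)

noncomputable def pt : α := (N.split (by norm_num : (0:ℚ) < 1)).choose.2.2

open Classical in
noncomputable def pick (u v : ℚ) : ℚ × ℚ × α :=
  if h : u < v then (N.split h).choose else (u, u, N.pt)

lemma pick_spec {u v : ℚ} (h : u < v) :
    u < (N.pick u v).1 ∧ (N.pick u v).1 < (N.pick u v).2.1 ∧ (N.pick u v).2.1 < v ∧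
      N.Inside (N.pick u v).2.2 (N.pick u v).1 (N.pick u v).2.1 := by
  rw [pick, dif_pos h]
  exact (N.split h).choose_spec

noncomputable def step (P : ℚ × ℚ) (b : Bool) : ℚ × ℚ :=
  cond b ((N.pick P.1 P.2).2.1, P.2) (P.1, (N.pick P.1 P.2).1)

noncomputable def go (P : ℚ × ℚ) : List Bool → ℚ × ℚ
  | [] => P
  | b :: l => go (N.step P b) l

lemma go_append (l l' : List Bool) (P : ℚ × ℚ) :
    N.go P (l ++ l') = N.go (N.go P l) l' := by
  induction l generalizing P with
  | nil => rfl
  | cons b l ih =>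
    simp only [List.cons_append, go]
    exact ih _

lemma step_lt {P : ℚ × ℚ} (h : P.1 < P.2) (b : Bool) :
    (N.step P b).1 < (N.step P b).2 ∧ P.1 ≤ (N.step P b).1 ∧ (N.step P b).2 ≤ P.2 := by
  obtain ⟨h1, h2, h3, _⟩ := N.pick_spec h
  cases b
  · exact ⟨h1, le_rfl, (h2.trans h3).le⟩
  · exact ⟨h3, (h1.trans h2).le, le_rfl⟩

lemma go_bounds (l : List Bool) {P : ℚ × ℚ} (h : P.1 < P.2) :
    (N.go P l).1 < (N.go P l).2 ∧ P.1 ≤ (N.go P l).1 ∧ (N.go P l).2 ≤ P.2 := by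
  induction l generalizing P with
  | nil => exact ⟨h, le_rfl, le_rfl⟩
  | cons b l ih =>
    obtain ⟨h1, h2, h3⟩ := N.step_lt h b
    obtain ⟨g1, g2, g3⟩ := ih h1
    exact ⟨g1, h2.trans g2, g3.trans h3⟩

/-- The window of the node addressed by `l`. -/
noncomputable def iv (l : List Bool) : ℚ × ℚ := N.go (0, 1) l

lemma iv_lt (l : List Bool) : (N.iv l).1 < (N.iv l).2 :=
  (N.go_bounds l (by norm_num : ((0:ℚ), (1:ℚ)).1 < ((0:ℚ), (1:ℚ)).2)).1

noncomputable def s1 (l : List Bool) : ℚ := (N.pick (N.iv l).1 (N.iv l).2).1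
noncomputable def s2 (l : List Bool) : ℚ := (N.pick (N.iv l).1 (N.iv l).2).2.1
noncomputable def E (l : List Bool) : α := (N.pick (N.iv l).1 (N.iv l).2).2.2

lemma node_spec (l : List Bool) :
    (N.iv l).1 < N.s1 l ∧ N.s1 l < N.s2 l ∧ N.s2 l < (N.iv l).2 ∧
      N.Inside (N.E l) (N.s1 l) (N.s2 l) :=
  N.pick_spec (N.iv_lt l)

lemma iv_cons_true (l k : List Bool) :
    N.iv (l ++ true :: k) = N.go (N.s2 l, (N.iv l).2) k := by
  rw [iv, N.go_append]
  rfl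

lemma iv_cons_false (l k : List Bool) :
    N.iv (l ++ false :: k) = N.go ((N.iv l).1, N.s1 l) k := by
  rw [iv, N.go_append]
  rfl

lemma right_bound (l k : List Bool) :
    N.s2 l ≤ (N.iv (l ++ true :: k)).1 ∧ (N.iv (l ++ true :: k)).2 ≤ (N.iv l).2 := by
  rw [N.iv_cons_true]
  have h : ((N.s2 l, (N.iv l).2)).1 < ((N.s2 l, (N.iv l).2)).2 := (N.node_spec l).2.2.1
  obtain ⟨_, h2, h3⟩ := N.go_bounds k h
  exact ⟨h2, h3⟩

lemma left_bound (l k : List Bool) :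
    (N.iv l).1 ≤ (N.iv (l ++ false :: k)).1 ∧ (N.iv (l ++ false :: k)).2 ≤ N.s1 l := by
  rw [N.iv_cons_false]
  have h : (((N.iv l).1, N.s1 l)).1 < (((N.iv l).1, N.s1 l)).2 := (N.node_spec l).1
  obtain ⟨_, h2, h3⟩ := N.go_bounds k h
  exact ⟨h2, h3⟩

/-- the "tree order" on addresses -/
def LL (l m : List Bool) : Prop :=
  (∃ k, m = l ++ true :: k) ∨ (∃ k, l = m ++ false :: k) ∨
    (∃ p k k', l = p ++ false :: k ∧ m = p ++ true :: k')

lemma E_mono {l m : List Bool} (h : LL l m) : N.E l < N.E m := by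
  rcases h with ⟨k, rfl⟩ | ⟨k, rfl⟩ | ⟨p, k, k', rfl, rfl⟩
  · -- m = l ++ true :: k
    refine N.inside_lt (N.node_spec l).2.2.2 (N.node_spec (l ++ true :: k)).2.2.2 ?_
    have h1 := (N.right_bound l k).1
    have h2 := (N.node_spec (l ++ true :: k)).1
    exact (h1.trans_lt h2).le
  · -- l = m ++ false :: k
    refine N.inside_lt (N.node_spec (m ++ false :: k)).2.2.2 (N.node_spec m).2.2.2 ?_
    have h1 := (N.left_bound m k).2
    have h2 := (N.node_spec (m ++ false :: k)).2.2.1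
    exact (h2.trans_le h1).le
  · -- split at p
    refine N.inside_lt (N.node_spec (p ++ false :: k)).2.2.2
      (N.node_spec (p ++ true :: k')).2.2.2 ?_
    have h1 := (N.node_spec (p ++ false :: k)).2.2.1
    have h2 := (N.left_bound p k).2
    have h3 := (N.node_spec p).2.1
    have h4 := (N.right_bound p k').1
    have h5 := (N.node_spec (p ++ true :: k')).1
    exact ((h1.trans_le h2).trans (h3.trans_le (h4.trans h5.le))).le

end Nice

lemma list_trich : ∀ l m : List Bool, l = m ∨ Nice.LL l m ∨ Nice.LL m l := by
  intro l
  induction l with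
  | nil =>
    intro m
    cases m with
    | nil => exact Or.inl rfl
    | cons b k =>
      cases b
      · exact Or.inr (Or.inr (Or.inr (Or.inl ⟨k, rfl⟩)))
      · exact Or.inr (Or.inl (Or.inl ⟨k, rfl⟩))
  | cons a l ih =>
    intro m
    cases m with
    | nil =>
      cases a
      · exact Or.inr (Or.inl (Or.inr (Or.inl ⟨l, rfl⟩)))
      · exact Or.inr (Or.inr (Or.inl ⟨l, rfl⟩))
    | cons b k =>
      cases a <;> cases b
      · -- both false
        rcases ih k with rfl | h | h
        · exact Or.inl rfl
        · rcases h with ⟨k', rfl⟩ | ⟨k', rfl⟩ | ⟨p, k', k'', h1, h2⟩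
          · exact Or.inr (Or.inl (Or.inl ⟨k', rfl⟩))
          · exact Or.inr (Or.inl (Or.inr (Or.inl ⟨k', rfl⟩)))
          · exact Or.inr (Or.inl (Or.inr (Or.inr
              ⟨false :: p, k', k'', by rw [h1]; rfl, by rw [h2]; rfl⟩)))
        · rcases h with ⟨k', rfl⟩ | ⟨k', rfl⟩ | ⟨p, k', k'', h1, h2⟩
          · exact Or.inr (Or.inr (Or.inl ⟨k', rfl⟩))
          · exact Or.inr (Or.inr (Or.inr (Or.inl ⟨k', rfl⟩)))
          · exact Or.inr (Or.inr (Or.inr (Or.inr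
              ⟨false :: p, k', k'', by rw [h1]; rfl, by rw [h2]; rfl⟩)))
      · -- a = false, b = true
        exact Or.inr (Or.inl (Or.inr (Or.inr ⟨[], l, k, rfl, rfl⟩)))
      · -- a = true, b = false
        exact Or.inr (Or.inr (Or.inr (Or.inr ⟨[], k, l, rfl, rfl⟩)))
      · -- both true
        rcases ih k with rfl | h | h
        · exact Or.inl rfl
        · rcases h with ⟨k', rfl⟩ | ⟨k', rfl⟩ | ⟨p, k', k'', h1, h2⟩
          · exact Or.inr (Or.inl (Or.inl ⟨k', rfl⟩))
          · exact Or.inr (Or.inl (Or.inr (Or.inl ⟨k', rfl⟩)))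
          · exact Or.inr (Or.inl (Or.inr (Or.inr
              ⟨true :: p, k', k'', by rw [h1]; rfl, by rw [h2]; rfl⟩)))
        · rcases h with ⟨k', rfl⟩ | ⟨k', rfl⟩ | ⟨p, k', k'', h1, h2⟩
          · exact Or.inr (Or.inr (Or.inl ⟨k', rfl⟩))
          · exact Or.inr (Or.inr (Or.inr (Or.inl ⟨k', rfl⟩)))
          · exact Or.inr (Or.inr (Or.inr (Or.inr
              ⟨true :: p, k', k'', by rw [h1]; rfl, by rw [h2]; rfl⟩)))

lemma LL_dense {l m : List Bool} (h : Nice.LL l m) :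
    ∃ w, Nice.LL l w ∧ Nice.LL w m := by
  rcases h with ⟨k, rfl⟩ | ⟨k, rfl⟩ | ⟨p, k, k', rfl, rfl⟩
  · refine ⟨(l ++ true :: k) ++ [false], Or.inl ⟨k ++ [false], by simp⟩,
      Or.inr (Or.inl ⟨[], rfl⟩)⟩
  · exact ⟨(m ++ false :: k) ++ [true], Or.inl ⟨[], rfl⟩,
      Or.inr (Or.inl ⟨k ++ [true], by simp⟩)⟩
  · exact ⟨p, Or.inr (Or.inl ⟨k, rfl⟩), Or.inl ⟨k', rfl⟩⟩

end NSAM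

/-- For an interval order `P`: if the chain of maximal antichains of `P` is
non-scattered and `P` has no infinite antichain, then `P` is non-scattered;
conversely, if `P` is non-scattered then so is its chain of maximal
antichains. -/
theorem nonscattered_iff_AM_nonscattered {α : Type*} [PartialOrder α]
    (hio : IsIntervalOrder α) :
    ((∀ A : Set α, IsAntichain (· ≤ ·) A → A.Finite) →
        AMNonScattered α → NonScattered α) ∧
    (NonScattered α → AMNonScattered α) := by
  constructor
  · intro hfin hAM
    classical
    obtain ⟨f, hmax, hiff⟩ := hAM
    set N : NSAM.Nice α :=
      { f := f, hio := hio, hmax := hmax,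
        hle := fun {q r} h => ((hiff q r).mp h).1,
        hne := fun {q r} h => ((hiff q r).mp h).2,
        hfin := fun q => hfin (f q) (hmax q).1 } with hN
    set C : Set α := Set.range N.E with hC
    have hmemE : ∀ l : List Bool, N.E l ∈ C := fun l => ⟨l, rfl⟩
    letI : LinearOrder ↥C :=
      { le := fun x y => (x : α) ≤ y
        lt := fun x y => (x : α) < y
        le_refl := fun x => le_refl _
        le_trans := fun x y z h h' => le_trans h h'
        lt_iff_le_not_ge := fun x y => lt_iff_le_not_ge
        le_antisymm := fun x y h h' => Subtype.ext (le_antisymm h h')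
        le_total := by
          rintro ⟨x, l, rfl⟩ ⟨y, m, rfl⟩
          rcases NSAM.list_trich l m with rfl | h | h
          · left; exact le_rfl
          · left; exact (N.E_mono h).le
          · right; exact (N.E_mono h).le
        toDecidableLE := fun _ _ => Classical.propDecidable _ }
    haveI : DenselyOrdered ↥C := by
      constructor
      rintro ⟨x, l, rfl⟩ ⟨y, m, rfl⟩ h
      have hlt : N.E l < N.E m := h
      rcases NSAM.list_trich l m with rfl | hLL | hLL
      · exact absurd hlt (lt_irrefl _)
      · obtain ⟨w, h1, h2⟩ := NSAM.LL_dense hLL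
        exact ⟨⟨N.E w, hmemE w⟩, N.E_mono h1, N.E_mono h2⟩
      · exact absurd (N.E_mono hLL) (lt_asymm hlt)
    haveI : Nontrivial ↥C := by
      refine ⟨⟨N.E [], hmemE []⟩, ⟨N.E [true], hmemE [true]⟩, ?_⟩
      intro h
      have h' := congrArg Subtype.val h
      exact absurd h' (N.E_mono (Or.inl ⟨[], rfl⟩)).ne
    obtain ⟨g⟩ := Order.embedding_from_countable_to_dense (α := ℚ) (β := ↥C)
    refine ⟨fun q => (g q : α), fun q r => ?_⟩
    constructor
    · intro h
      exact g.strictMono h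
    · intro h
      have h' : g q < g r := h
      exact g.lt_iff_lt.mp h'
  · rintro ⟨g, hg⟩
    choose F hF1 hF2 using fun q : ℚ => NSAM.extend_max (g q)
    refine ⟨F, hF2, fun q r => ⟨fun h => ?_, fun h => ?_⟩⟩
    · have hlt : g q < g r := (hg q r).mp h
      refine ⟨NSAM.amle_of_link hio (hF2 q) (hF2 r) (hF1 q) (hF1 r) hlt, ?_⟩
      intro he
      have hgr : g r ∈ F q := by rw [he]; exact hF1 r
      exact absurd (NSAM.anti_eq (hF2 q).1 (hF1 q) hgr hlt.le) hlt.ne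
    · rcases lt_trichotomy q r with h' | h' | h'
      · exact h'
      · exact absurd (by rw [h']) h.2
      · exfalso
        have hlt : g r < g q := (hg r q).mp h'
        have h2 := NSAM.amle_of_link hio (hF2 r) (hF2 q) (hF1 r) (hF1 q) hlt
        exact h.2 (NSAM.AMle_antisymm (hF2 q) (hF2 r) h.1 h2)
end

section
/- An interval order without infinite antichains is scattered if and only if the chain ({U(x) : x ∈ V}, ⊆) of strict up-sets ordered by inclusion is a scattered chain. -/
/-- `P` is scattered: it contains no chain isomorphic to `ℚ`. -/
def Scattered (α : Type*) [PartialOrder α] : Prop :=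
  ¬ ∃ f : ℚ → α, ∀ q r : ℚ, q < r ↔ f q < f r

/-- The chain `({U(x) : x ∈ V}, ⊆)` of strict up-sets is scattered. -/
def UpsetsScattered (α : Type*) [PartialOrder α] : Prop :=
  ¬ ∃ f : ℚ → Set α, (∀ q : ℚ, ∃ x : α, f q = {y : α | x < y}) ∧
      ∀ q r : ℚ, q < r ↔ f q ⊂ f r

section Aux

variable {α : Type*} [PartialOrder α]

/-- The 2+2 characterization of interval orders. -/
lemma io_key (hio : IsIntervalOrder α) {a b c d : α} (hab : a < b) (hcd : c < d) :
    a < d ∨ c < b := by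
  by_contra h
  push_neg at h
  obtain ⟨had, hcb⟩ := h
  apply hio
  refine ⟨a, b, c, d, hab, hcd, ⟨?_, ?_⟩, ⟨?_, ?_⟩, ⟨?_, ?_⟩, ⟨?_, ?_⟩⟩
  · exact fun h => had (lt_of_le_of_lt h hcd)
  · exact fun h => hcb (lt_of_le_of_lt h hab)
  · intro h
    rcases h.lt_or_eq with h' | h'
    · exact had h'
    · exact hcb (h' ▸ hcd |>.trans hab)
  · exact fun h => hcb ((hcd.trans_le h).trans hab)
  · exact fun h => had ((hab.trans_le h).trans hcd)
  · intro h
    rcases h.lt_or_eq with h' | h'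
    · exact hcb h'
    · exact had (h' ▸ hab |>.trans hcd)
  · exact fun h => had (hab.trans_le h)
  · exact fun h => hcb (hcd.trans_le h)

/-- In an interval order, strict up-sets are totally ordered by inclusion. -/
lemma upsets_total (hio : IsIntervalOrder α) (a b : α) :
    {y : α | a < y} ⊆ {y : α | b < y} ∨ {y : α | b < y} ⊆ {y : α | a < y} := by
  by_cases h : ∀ x : α, a < x → b < x
  · exact Or.inl h
  · push_neg at h
    obtain ⟨x, hax, hbx⟩ := h
    right
    intro y hy
    rcases io_key hio hax hy with h' | h'
    · exact h'
    · exact absurd h' hbx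

/-- Key existence lemma: given a `ℚ`-indexed family with strictly decreasing up-sets,
for any `s < t` there is `w` above `y s` whose up-set contains the up-set of `y t`. -/
lemma exists_high (hio : IsIntervalOrder α)
    (hfa : ∀ A : Set α, IsAntichain (· ≤ ·) A → A.Finite)
    (y : ℚ → α) (hy : ∀ {q r : ℚ}, q < r → {z : α | y r < z} ⊂ {z : α | y q < z})
    {s t : ℚ} (hst : s < t) :
    ∃ w : α, y s < w ∧ {z : α | y t < z} ⊆ {z : α | w < z} := by
  by_contra h
  push_neg at h
  -- every element above `y s` has up-set strictly inside that of `y t`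
  have hsmall : ∀ w : α, y s < w → {z : α | w < z} ⊆ {z : α | y t < z} := by
    intro w hw
    rcases upsets_total hio w (y t) with h' | h'
    · exact h'
    · exact absurd h' (h w hw)
  set M : Set α := {z : α | y s < z} \ {z : α | y t < z} with hM
  have hanti : IsAntichain (· ≤ ·) M := by
    intro w1 hw1 w2 hw2 hne hle
    have hlt : w1 < w2 := lt_of_le_of_ne hle hne
    have : w2 ∈ {z : α | y t < z} := hsmall w1 hw1.1 hlt
    exact hw2.2 this
  have hMfin : M.Finite := hfa M hanti
  -- injectively map the infinitely many rationals in `(s,t)` to subsets of `M`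
  set A : ℚ → Set α := fun u => {z : α | y u < z} \ {z : α | y t < z} with hA
  have hsub : ∀ u ∈ Set.Ioo s t, A u ⊆ M := by
    intro u hu z hz
    exact ⟨(hy hu.1).1 hz.1, hz.2⟩
  have hinj : Set.InjOn A (Set.Ioo s t) := by
    intro u1 h1 u2 h2 heq
    by_contra hne
    -- wlog u1 < u2
    rcases lt_or_gt_of_ne hne with hlt | hlt
    · obtain ⟨z, hz1, hz2⟩ := Set.exists_of_ssubset (hy hlt)
      have hz3 : z ∉ {z : α | y t < z} := fun hz => hz2 ((hy h2.2).1 hz)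
      have : z ∈ A u1 := ⟨hz1, hz3⟩
      rw [heq] at this
      exact hz2 this.1
    · obtain ⟨z, hz1, hz2⟩ := Set.exists_of_ssubset (hy hlt)
      have hz3 : z ∉ {z : α | y t < z} := fun hz => hz2 ((hy h1.2).1 hz)
      have : z ∈ A u2 := ⟨hz1, hz3⟩
      rw [← heq] at this
      exact hz2 this.1
  have hinf : (A '' Set.Ioo s t).Infinite := (Set.Ioo_infinite hst).image hinj
  have hfin : (A '' Set.Ioo s t).Finite := by
    apply hMfin.finite_subsets.subset
    rintro _ ⟨u, hu, rfl⟩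
    exact hsub u hu
  exact hinf hfin

end Aux

/-- An interval order with no infinite antichain is scattered iff the chain of
its strict up-sets, ordered by inclusion, is scattered. -/
theorem scattered_iff_upsets_scattered {α : Type*} [PartialOrder α]
    (hio : IsIntervalOrder α)
    (hfa : ∀ A : Set α, IsAntichain (· ≤ ·) A → A.Finite) :
    Scattered α ↔ UpsetsScattered α := by
  constructor
  · -- Scattered → UpsetsScattered
    intro hs
    rintro ⟨f, hf1, hf2⟩
    apply hs
    choose x hx using hf1
    set y : ℚ → α := fun q => x (-q) with hy
    have hmono : ∀ {q r : ℚ}, q < r → {z : α | y r < z} ⊂ {z : α | y q < z} := by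
      intro q r h
      have : f (-r) ⊂ f (-q) := (hf2 (-r) (-q)).mp (by linarith)
      rwa [hx (-r), hx (-q)] at this
    -- an order embedding of `ℚ ×ₗ Bool` into `ℚ` gives disjoint windows
    haveI : Countable (ℚ ×ₗ Bool) := inferInstanceAs (Countable (ℚ × Bool))
    obtain ⟨e⟩ : Nonempty ((ℚ ×ₗ Bool) ↪o ℚ) := Order.embedding_from_countable_to_dense _ _
    set s : ℚ → ℚ := fun q => e (toLex (q, false)) with hs'
    set t : ℚ → ℚ := fun q => e (toLex (q, true)) with ht'
    have hst : ∀ q : ℚ, s q < t q := by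
      intro q
      apply e.strictMono
      rw [Prod.Lex.lt_iff]
      exact Or.inr ⟨rfl, by simp⟩
    have hts : ∀ {q r : ℚ}, q < r → t q < s r := by
      intro q r h
      apply e.strictMono
      rw [Prod.Lex.lt_iff]
      exact Or.inl h
    have hw : ∀ q : ℚ, ∃ w : α, y (s q) < w ∧ {z : α | y (t q) < z} ⊆ {z : α | w < z} :=
      fun q => exists_high hio hfa y hmono (hst q)
    choose w hw1 hw2 using hw
    have hchain : ∀ {q r : ℚ}, q < r → w q < w r := by
      intro q r h
      apply hw2 q
      exact (hmono (hts h)).1 (hw1 r)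
    refine ⟨w, fun q r => ⟨hchain, ?_⟩⟩
    intro h
    rcases lt_trichotomy q r with h' | h' | h'
    · exact h'
    · subst h'; exact absurd h (lt_irrefl _)
    · exact absurd (hchain h') (asymm h)
  · -- UpsetsScattered → Scattered
    intro hu
    rintro ⟨f, hf⟩
    apply hu
    refine ⟨fun q => {z : α | f (-q) < z}, fun q => ⟨f (-q), rfl⟩, fun q r => ?_⟩
    have key : ∀ {q r : ℚ}, q < r → {z : α | f (-q) < z} ⊂ {z : α | f (-r) < z} := by
      intro q r h
      have hlt : f (-r) < f (-q) := (hf (-r) (-q)).mp (by linarith)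
      constructor
      · exact fun z hz => hlt.trans hz
      · intro hsub
        exact lt_irrefl (f (-q)) (hsub hlt)
    constructor
    · exact key
    · intro h
      rcases lt_trichotomy q r with h' | h' | h'
      · exact h'
      · subst h'; exact absurd h (lt_irrefl _)
      · exact absurd (h.trans (key h')) (lt_irrefl _)
end

section
/- Let G = (V, E) be a graph and M a module of G. If M contains a maximal (with respect to set inclusion) independent set of G, then V \ M is also a module of G. -/
/-- A module of a graph: a set of vertices indistinguishable from outside. -/
def GraphModule {V : Type*} (G : SimpleGraph V) (M : Set V) : Prop :=
  ∀ a ∈ M, ∀ b ∈ M, ∀ x ∉ M, (G.Adj x a ↔ G.Adj x b)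

/-- An independent set of a graph. -/
def IndepSet {V : Type*} (G : SimpleGraph V) (S : Set V) : Prop :=
  ∀ a ∈ S, ∀ b ∈ S, ¬ G.Adj a b

/-- If a module `M` of a graph `G` contains a maximal independent set of `G`,
then the complement `V \ M` is also a module of `G`. -/
theorem compl_module_of_contains_max_indep {V : Type*} (G : SimpleGraph V)
    (M : Set V) (hM : GraphModule G M)
    (I : Set V) (hI : IndepSet G I)
    (hImax : ∀ S : Set V, IndepSet G S → I ⊆ S → S = I)
    (hIM : I ⊆ M) :
    GraphModule G (Set.univ \ M) := by
  -- Every vertex outside M is adjacent to every vertex of M.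
  have key : ∀ a ∉ M, ∀ x ∈ M, G.Adj x a := by
    intro a haM x hxM
    -- a has a neighbor in I
    have hnb : ∃ i ∈ I, G.Adj a i := by
      by_contra h
      push_neg at h
      have hind : IndepSet G (insert a I) := by
        intro u hu v hv
        rcases hu with rfl | hu <;> rcases hv with rfl | hv
        · exact G.loopless.irrefl _
        · exact h v hv
        · intro hadj; exact h u hu hadj.symm
        · exact hI u hu v hv
      have := hImax _ hind (Set.subset_insert a I)
      have : a ∈ I := this ▸ Set.mem_insert a I
      exact haM (hIM this)
    obtain ⟨i, hiI, hai⟩ := hnb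
    exact ((hM i (hIM hiI) x hxM a haM).mp hai).symm
  intro a ha b hb x hx
  simp only [Set.mem_diff, Set.mem_univ, true_and, not_not] at ha hb hx
  exact ⟨fun _ => (key b hb x hx), fun _ => (key a ha x hx)⟩
end
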